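/- (Impossibility of perfect distinguishability on both systems.) Let H_S and H_A be finite-dimensional complex Hilbert spaces, L_S a self-adjoint operator on H_S, L_A a self-adjoint operator on H_A, and let U be a unitary operator on H_S ⊗ H_A commuting with L_S ⊗ 1 + 1 ⊗ L_A. Let ψ0, ψ1 ∈ H_S be orthogonal unit vectors with ⟨ψ0, L_S ψ1⟩ ≠ 0, let σ be a density matrix on H_A, and ρ_i := U (|ψ_i⟩⟨ψ_i| ⊗ σ) U* for i = 0, 1. Then it is not the case that both F(ρ0^S, ρ1^S) = 0 and F(ρ0^A, ρ1^A) = 0, where ρ_i^S, ρ_i^A are the reduced density matrices of ρ_i on H_S and H_A and F is the fidelity. -/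

import Mathlib

open Matrix Kronecker
open scoped ComplexOrder

-- Positive semidefinite square root (zero if not PSD).
open Classical in
noncomputable def psqrt {n : Type*} [Fintype n] [DecidableEq n] (A : Matrix n n ℂ) :
    Matrix n n ℂ :=
  if h : A.PosSemidef then
    (h.1.eigenvectorUnitary : Matrix n n ℂ) * diagonal ((↑) ∘ Real.sqrt ∘ h.1.eigenvalues) *
      (star h.1.eigenvectorUnitary : Matrix n n ℂ)
  else 0

noncomputable def fidelity {n : Type*} [Fintype n] [DecidableEq n] (ρ0 ρ1 : Matrix n n ℂ) : ℝ :=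
  (psqrt (psqrt ρ0 * ρ1 * psqrt ρ0)).trace.re

noncomputable def opNorm {n : Type*} [Fintype n] [DecidableEq n] (A : Matrix n n ℂ) : ℝ :=
  ‖LinearMap.toContinuousLinearMap (Matrix.toEuclideanLin A)‖

noncomputable def ptraceRight {m n : Type*} [Fintype m] [Fintype n]
    (ρ : Matrix (m × n) (m × n) ℂ) : Matrix m m ℂ :=
  Matrix.of fun i j => ∑ k, ρ (i, k) (j, k)

noncomputable def ptraceLeft {m n : Type*} [Fintype m] [Fintype n]
    (ρ : Matrix (m × n) (m × n) ℂ) : Matrix n n ℂ :=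
  Matrix.of fun i j => ∑ k, ρ (k, i) (k, j)

/-!
Write `σ = s⋆s` and `V φ := U (φ ⊗ s⋆)`, so that `U (|φ⟩⟨χ| ⊗ σ) U⋆ = V φ (V χ)⋆`. Zero fidelity
of positive matrices forces their product to vanish. For the `S`-marginals `ρᵢˢ = Rᵢ Rᵢ⋆`, where
`Rᵢ` is `V ψᵢ` with its `A`-index moved to the columns, this gives `R₀⋆ R₁ = 0`, which says that
the `A`-marginal of the cross term `T := V ψ₁ (V ψ₀)⋆ = U (|ψ₁⟩⟨ψ₀| ⊗ σ) U⋆` vanishes;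
symmetrically, so does its `S`-marginal. Hence `tr ((L_S ⊗ 1 + 1 ⊗ L_A) T) = tr (L_S Tˢ) +
tr (L_A Tᴬ) = 0`. But `U` commutes with `L_S ⊗ 1 + 1 ⊗ L_A`, so the same trace equals
`tr ((L_S ⊗ 1 + 1 ⊗ L_A) (|ψ₁⟩⟨ψ₀| ⊗ σ)) = ⟨ψ₀, L_S ψ₁⟩ tr σ + ⟨ψ₀, ψ₁⟩ tr (L_A σ) = ⟨ψ₀, L_S ψ₁⟩`.
-/

open scoped MatrixOrder

lemma Matrix.PosSemidef.eq_zero_of_re_trace_eq_zero {n : Type*} [Fintype n] {A : Matrix n n ℂ}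
    (hA : A.PosSemidef) (h : A.trace.re = 0) : A = 0 := by
  refine hA.trace_eq_zero_iff.mp (Complex.ext h ?_)
  exact (Complex.nonneg_iff.mp hA.trace_nonneg).2.symm

section Fidelity

variable {n : Type*} [Fintype n] [DecidableEq n]

lemma psqrt_eq_sqrt {A : Matrix n n ℂ} (hA : A.PosSemidef) : psqrt A = CFC.sqrt A := by
  rw [psqrt, dif_pos hA, CFC.sqrt_eq_cfc, cfc_nnreal_eq_real _ A, hA.1.cfc_eq, IsHermitian.cfc,
    Unitary.conjStarAlgAut_apply]
  congr 3
  ext i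
  simp [max_eq_left (hA.eigenvalues_nonneg i)]

lemma mul_eq_zero_of_fidelity_eq_zero {α β : Matrix n n ℂ} (hα : α.PosSemidef)
    (hβ : β.PosSemidef) (h : fidelity α β = 0) : α * β = 0 := by
  set a := CFC.sqrt α
  obtain ⟨b, rfl⟩ := CStarAlgebra.nonneg_iff_eq_star_mul_self.mp hβ.nonneg
  have ha : star a = a := (CFC.sqrt_nonneg α).isSelfAdjoint.star_eq
  have hM : 0 ≤ a * (star b * b) * a := by
    simpa [ha] using star_left_conjugate_nonneg hβ.nonneg a
  have hM0 : a * (star b * b) * a = 0 := by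
    rw [fidelity, psqrt_eq_sqrt hα, psqrt_eq_sqrt hM.posSemidef] at h
    exact (CFC.sqrt_eq_zero_iff _).mp
      ((CFC.sqrt_nonneg _).posSemidef.eq_zero_of_re_trace_eq_zero h)
  have hba : b * a = 0 := by
    rw [← conjTranspose_mul_self_eq_zero, conjTranspose_mul, ← star_eq_conjTranspose,
      ← star_eq_conjTranspose, ha, ← hM0]
    simp only [mul_assoc]
  have hβα : star b * b * α = 0 := by
    rw [← CFC.sqrt_mul_sqrt_self α, mul_assoc (star b), ← mul_assoc b, hba]
    simp
  simpa [star_mul, hα.nonneg.isSelfAdjoint.star_eq] using congrArg star hβα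

end Fidelity

section PartialTrace

variable {m n p : Type*} [Fintype m] [Fintype n] [Fintype p]

def rowFactorToCols (V : Matrix (m × n) p ℂ) : Matrix m (n × p) ℂ :=
  of fun i kl => V (i, kl.1) kl.2

lemma ptraceRight_mul_conjTranspose (V W : Matrix (m × n) p ℂ) :
    ptraceRight (V * Wᴴ) = rowFactorToCols V * (rowFactorToCols W)ᴴ := by
  ext i j
  simp [ptraceRight, rowFactorToCols, mul_apply, Fintype.sum_prod_type]

lemma ptraceLeft_eq_ptraceRight_submatrix_swap (ρ : Matrix (m × n) (m × n) ℂ) :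
    ptraceLeft ρ = ptraceRight (ρ.submatrix Prod.swap Prod.swap) :=
  rfl

lemma ptraceRight_eq_ptraceLeft_submatrix_swap (ρ : Matrix (m × n) (m × n) ℂ) :
    ptraceRight ρ = ptraceLeft (ρ.submatrix Prod.swap Prod.swap) :=
  rfl

omit [Fintype m] [Fintype n] in
lemma submatrix_swap_mul_conjTranspose (V W : Matrix (m × n) p ℂ) :
    (V * Wᴴ).submatrix Prod.swap Prod.swap =
      V.submatrix Prod.swap id * (W.submatrix Prod.swap id)ᴴ := by
  rw [conjTranspose_submatrix, submatrix_mul _ _ _ _ _ Function.bijective_id]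

lemma posSemidef_ptraceRight_mul_conjTranspose_self (V : Matrix (m × n) p ℂ) :
    (ptraceRight (V * Vᴴ)).PosSemidef := by
  rw [ptraceRight_mul_conjTranspose]
  exact posSemidef_self_mul_conjTranspose _

lemma posSemidef_ptraceLeft_mul_conjTranspose_self (V : Matrix (m × n) p ℂ) :
    (ptraceLeft (V * Vᴴ)).PosSemidef := by
  rw [ptraceLeft_eq_ptraceRight_submatrix_swap, submatrix_swap_mul_conjTranspose]
  exact posSemidef_ptraceRight_mul_conjTranspose_self _

lemma ptraceLeft_mul_conjTranspose_eq_zero {V W : Matrix (m × n) p ℂ}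
    (h : ptraceRight (V * Vᴴ) * ptraceRight (W * Wᴴ) = 0) : ptraceLeft (W * Vᴴ) = 0 := by
  simp only [ptraceRight_mul_conjTranspose] at h
  have hVW : (rowFactorToCols V)ᴴ * rowFactorToCols W = 0 :=
    (mul_self_mul_conjTranspose_eq_zero _ _).mp ((self_mul_conjTranspose_mul_eq_zero _ _).mp
      (by simpa only [mul_assoc] using h))
  ext i j
  calc ptraceLeft (W * Vᴴ) i j
      = ∑ l, ((rowFactorToCols V)ᴴ * rowFactorToCols W) (j, l) (i, l) := by
        simp only [ptraceLeft, rowFactorToCols, of_apply, mul_apply, conjTranspose_apply]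
        rw [Finset.sum_comm]
        simp only [mul_comm]
    _ = 0 := by simp [hVW]

lemma ptraceRight_mul_conjTranspose_eq_zero {V W : Matrix (m × n) p ℂ}
    (h : ptraceLeft (V * Vᴴ) * ptraceLeft (W * Wᴴ) = 0) : ptraceRight (W * Vᴴ) = 0 := by
  simp only [ptraceLeft_eq_ptraceRight_submatrix_swap, submatrix_swap_mul_conjTranspose] at h
  rw [ptraceRight_eq_ptraceLeft_submatrix_swap, submatrix_swap_mul_conjTranspose]
  exact ptraceLeft_mul_conjTranspose_eq_zero h

lemma trace_kronecker_one_mul [DecidableEq n] (X : Matrix m m ℂ) (ρ : Matrix (m × n) (m × n) ℂ) :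
    ((X ⊗ₖ (1 : Matrix n n ℂ)) * ρ).trace = (X * ptraceRight ρ).trace := by
  simp only [trace, diag_apply, mul_apply, kroneckerMap_apply, one_apply, mul_ite, mul_one,
    mul_zero, ite_mul, zero_mul, Fintype.sum_prod_type, Finset.sum_ite_eq, Finset.mem_univ,
    ↓reduceIte, ptraceRight, of_apply, Finset.mul_sum]
  exact Finset.sum_congr rfl fun _ _ => Finset.sum_comm

lemma trace_one_kronecker_mul [DecidableEq m] (Y : Matrix n n ℂ) (ρ : Matrix (m × n) (m × n) ℂ) :
    (((1 : Matrix m m ℂ) ⊗ₖ Y) * ρ).trace = (Y * ptraceLeft ρ).trace := by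
  simp only [trace, diag_apply, mul_apply, kroneckerMap_apply, one_apply, ite_mul, one_mul,
    zero_mul, Fintype.sum_prod_type, Finset.sum_ite_irrel, Finset.sum_const_zero,
    Finset.sum_ite_eq, Finset.mem_univ, ↓reduceIte, ptraceLeft, of_apply, Finset.mul_sum]
  rw [Finset.sum_comm]
  exact Finset.sum_congr rfl fun _ _ => Finset.sum_comm

end PartialTrace

lemma trace_mul_conj_eq_of_commute {k R : Type*} [Fintype k] [DecidableEq k] [CommSemiring R]
    {M U V : Matrix k k R} (hVU : V * U = 1) (hUM : U * M = M * U) (X : Matrix k k R) :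
    (M * (U * X * V)).trace = (M * X).trace := by
  rw [← mul_assoc, ← mul_assoc, ← hUM, mul_assoc U M X, trace_mul_cycle, hVU, one_mul]

lemma trace_kroneckerSum_mul_kronecker {m n R : Type*} [Fintype m] [Fintype n] [DecidableEq m]
    [DecidableEq n] [CommSemiring R] (K A : Matrix m m R) (L B : Matrix n n R) :
    ((K ⊗ₖ (1 : Matrix n n R) + (1 : Matrix m m R) ⊗ₖ L) * (A ⊗ₖ B)).trace =
      (K * A).trace * B.trace + A.trace * (L * B).trace := by
  rw [add_mul, ← mul_kronecker_mul, ← mul_kronecker_mul, trace_add, trace_kronecker,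
    trace_kronecker, one_mul, one_mul]

lemma vecMulVec_kronecker_conjTranspose_mul_self {m n p : Type*} [Fintype p] (φ χ : m → ℂ)
    (s : Matrix p n ℂ) :
    vecMulVec φ (star χ) ⊗ₖ (sᴴ * s) =
      (replicateCol Unit φ ⊗ₖ sᴴ) * (replicateCol Unit χ ⊗ₖ sᴴ)ᴴ := by
  rw [conjTranspose_kronecker, conjTranspose_conjTranspose, ← mul_kronecker_mul,
    conjTranspose_replicateCol, ← vecMulVec_eq]

theorem no_perfect_distinguishability_on_both_general
    {m n : Type*} [Fintype m] [Fintype n] [DecidableEq m] [DecidableEq n]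
    (LS : Matrix m m ℂ)
    (LA : Matrix n n ℂ)
    (U : Matrix (m × n) (m × n) ℂ) (hU : Uᴴ * U = 1)
    (hcomm : U * (LS ⊗ₖ (1 : Matrix n n ℂ) + (1 : Matrix m m ℂ) ⊗ₖ LA)
           = (LS ⊗ₖ (1 : Matrix n n ℂ) + (1 : Matrix m m ℂ) ⊗ₖ LA) * U)
    (ψ0 ψ1 : m → ℂ)
    (horth : star ψ0 ⬝ᵥ ψ1 = 0)
    (hne : star ψ0 ⬝ᵥ (LS *ᵥ ψ1) ≠ 0)
    (σ : Matrix n n ℂ) (hσ : σ.PosSemidef) (hσt : σ.trace = 1)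
    (ρ0 ρ1 : Matrix (m × n) (m × n) ℂ)
    (hρ0 : ρ0 = U * (vecMulVec ψ0 (star ψ0) ⊗ₖ σ) * Uᴴ)
    (hρ1 : ρ1 = U * (vecMulVec ψ1 (star ψ1) ⊗ₖ σ) * Uᴴ) :
    ¬ (fidelity (ptraceRight ρ0) (ptraceRight ρ1) = 0 ∧
       fidelity (ptraceLeft ρ0) (ptraceLeft ρ1) = 0) := by
  rintro ⟨hFS, hFA⟩
  obtain ⟨s, rfl⟩ := CStarAlgebra.nonneg_iff_eq_star_mul_self.mp hσ.nonneg
  set V : (m → ℂ) → Matrix (m × n) (Unit × n) ℂ := fun φ => U * (replicateCol Unit φ ⊗ₖ sᴴ)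
  have hV (φ χ : m → ℂ) : U * (vecMulVec φ (star χ) ⊗ₖ (star s * s)) * Uᴴ = V φ * (V χ)ᴴ := by
    rw [star_eq_conjTranspose, vecMulVec_kronecker_conjTranspose_mul_self]
    simp only [V, conjTranspose_mul, Matrix.mul_assoc]
  rw [hV] at hρ0 hρ1
  subst hρ0 hρ1
  have hLeft : ptraceLeft (V ψ1 * (V ψ0)ᴴ) = 0 :=
    ptraceLeft_mul_conjTranspose_eq_zero <| mul_eq_zero_of_fidelity_eq_zero
      (posSemidef_ptraceRight_mul_conjTranspose_self _)
      (posSemidef_ptraceRight_mul_conjTranspose_self _) hFS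
  have hRight : ptraceRight (V ψ1 * (V ψ0)ᴴ) = 0 :=
    ptraceRight_mul_conjTranspose_eq_zero <| mul_eq_zero_of_fidelity_eq_zero
      (posSemidef_ptraceLeft_mul_conjTranspose_self _)
      (posSemidef_ptraceLeft_mul_conjTranspose_self _) hFA
  apply hne
  calc star ψ0 ⬝ᵥ (LS *ᵥ ψ1)
      = ((LS ⊗ₖ 1 + 1 ⊗ₖ LA) * (vecMulVec ψ1 (star ψ0) ⊗ₖ (star s * s))).trace := by
        rw [trace_kroneckerSum_mul_kronecker, mul_vecMulVec, trace_vecMulVec, trace_vecMulVec,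
          dotProduct_comm (LS *ᵥ ψ1), dotProduct_comm ψ1, horth, hσt]
        ring
    _ = ((LS ⊗ₖ 1 + 1 ⊗ₖ LA) * (U * (vecMulVec ψ1 (star ψ0) ⊗ₖ (star s * s)) * Uᴴ)).trace :=
        (trace_mul_conj_eq_of_commute hU hcomm _).symm
    _ = 0 := by
        rw [hV, add_mul, trace_add, trace_kronecker_one_mul, trace_one_kronecker_mul, hLeft,
          hRight]
        simp

/-- Impossibility of perfect distinguishability on both systems. -/
theorem no_perfect_distinguishability_on_both
    {m n : Type*} [Fintype m] [Fintype n] [DecidableEq m] [DecidableEq n]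
    (LS : Matrix m m ℂ) (hLS : LS.IsHermitian)
    (LA : Matrix n n ℂ) (hLA : LA.IsHermitian)
    (U : Matrix (m × n) (m × n) ℂ) (hU : Uᴴ * U = 1) (hU' : U * Uᴴ = 1)
    (hcomm : U * (LS ⊗ₖ (1 : Matrix n n ℂ) + (1 : Matrix m m ℂ) ⊗ₖ LA)
           = (LS ⊗ₖ (1 : Matrix n n ℂ) + (1 : Matrix m m ℂ) ⊗ₖ LA) * U)
    (ψ0 ψ1 : m → ℂ) (hψ0 : star ψ0 ⬝ᵥ ψ0 = 1) (hψ1 : star ψ1 ⬝ᵥ ψ1 = 1)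
    (horth : star ψ0 ⬝ᵥ ψ1 = 0)
    (hne : star ψ0 ⬝ᵥ (LS *ᵥ ψ1) ≠ 0)
    (σ : Matrix n n ℂ) (hσ : σ.PosSemidef) (hσt : σ.trace = 1)
    (ρ0 ρ1 : Matrix (m × n) (m × n) ℂ)
    (hρ0 : ρ0 = U * (vecMulVec ψ0 (star ψ0) ⊗ₖ σ) * Uᴴ)
    (hρ1 : ρ1 = U * (vecMulVec ψ1 (star ψ1) ⊗ₖ σ) * Uᴴ) :
    ¬ (fidelity (ptraceRight ρ0) (ptraceRight ρ1) = 0 ∧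
       fidelity (ptraceLeft ρ0) (ptraceLeft ρ1) = 0) :=
  no_perfect_distinguishability_on_both_general LS LA U hU hcomm ψ0 ψ1 horth hne σ hσ hσt ρ0 ρ1 hρ0
    hρ1
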